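/- arXiv:2003.09502 — 3 statements merged into one kernel-verified Lean document; each statement's English description precedes it below -/
import Mathlib

section
/- Let G be a finite group and ρ a faithful finite-dimensional complex representation of G (i.e., ρ is injective). Then the McKay quiver of ρ is strongly connected: for all irreducible characters χ_i, χ_j of G there exists a natural number L ≥ 0 such that ⟨χ_ρ^L · χ_i, χ_j⟩ ≥ 1. -/
/-!
The multiplicity `⟨χ_ρ^L · χᵢ, χⱼ⟩` is the dimension of `Hom_G(Vⱼ, ρ^{⊗L} ⊗ Vᵢ)`, a natural
number. If it vanished for every `L`, then `∑_g p(χ_ρ(g)) χᵢ(g) conj(χⱼ(g)) = 0` for every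
polynomial `p`. The eigenvalues of `ρ(g)` are roots of unity, so `χ_ρ(g) = dim ρ` forces
`ρ(g) = 1`, hence `g = 1` by faithfulness. Taking for `p` a Lagrange basis polynomial that is `1`
at `dim ρ` and `0` at the other values of `χ_ρ` leaves `dim Vᵢ · dim Vⱼ = 0`, which is absurd.
-/

open scoped ComplexOrder

/-- A function `χ : G → ℂ` is an irreducible character of `G` if it is the character of
some simple (irreducible) finite-dimensional complex representation of `G`. -/
def IsIrrChar (G : Type) [Group G] (χ : G → ℂ) : Prop :=
  ∃ V : FDRep ℂ G, CategoryTheory.Simple V ∧ V.character = χ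

/-- The standard inner product of complex-valued class functions on a finite group. -/
noncomputable def innChar (G : Type) [Group G] [Fintype G] (φ ψ : G → ℂ) : ℂ :=
  (Fintype.card G : ℂ)⁻¹ * ∑ g : G, φ g * (starRingEnd ℂ) (ψ g)

open Module Polynomial CategoryTheory MonoidalCategory

namespace Module.End

theorem pow_apply_of_mem_eigenspace {R M : Type*} [CommRing R] [AddCommGroup M] [Module R M]
    {f : End R M} {μ : R} {x : M} (hx : x ∈ f.eigenspace μ) (j : ℕ) :
    (f ^ j) x = μ ^ j • x := by
  rw [mem_eigenspace_iff] at hx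
  induction j with
  | zero => simp
  | succ j ih => rw [pow_succ', mul_apply, ih, map_smul, hx, smul_smul, pow_succ]

section Field

variable {K V : Type*} [Field K] [AddCommGroup V] [Module K V] {f : End K V} {k : ℕ}

theorem isSemisimple_of_pow_eq_one [FiniteDimensional K V] (hk : (k : K) ≠ 0) (hf : f ^ k = 1) :
    f.IsSemisimple := by
  apply isSemisimple_of_squarefree_aeval_eq_zero
    (separable_X_pow_sub_C (1 : K) hk one_ne_zero).squarefree
  simp [hf]

theorem HasEigenvalue.pow_eq_one {μ : K} (hμ : f.HasEigenvalue μ) (hf : f ^ k = 1) :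
    μ ^ k = 1 := by
  obtain ⟨v, hv⟩ := hμ.exists_hasEigenvector
  refine smul_left_injective K hv.2 ?_
  simpa [hf] using (hv.pow_apply k).symm

end Field

section IsAlgClosed

variable {K V : Type*} [Field K] [IsAlgClosed K] [AddCommGroup V] [Module K V]
  [FiniteDimensional K V] {f : End K V}

theorem IsSemisimple.trace_pow_eq_sum_eigenvalues (hf : f.IsSemisimple) (j : ℕ) :
    LinearMap.trace K V (f ^ j) =
      ∑ μ : f.Eigenvalues, (finrank K (f.eigenspace μ) : K) * (μ : K) ^ j := by
  classical
  have hint : DirectSum.IsInternal f.eigenspace :=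
    DirectSum.isInternal_submodule_of_iSupIndep_of_iSup_eq_top f.eigenspaces_iSupIndep
      hf.iSup_eigenspace_eq_top
  have hmaps (μ : K) : Set.MapsTo (f ^ j) (f.eigenspace μ) (f.eigenspace μ) := fun x hx => by
    rw [SetLike.mem_coe, pow_apply_of_mem_eigenspace hx]
    exact Submodule.smul_mem _ _ hx
  have hrestrict (μ : K) : (f ^ j).restrict (hmaps μ) = μ ^ j • 1 := by
    ext x
    exact pow_apply_of_mem_eigenspace x.2 j
  rw [LinearMap.trace_eq_sum_trace_restrict' hint f.finite_hasEigenvalue hmaps]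
  simp only [hrestrict, map_smul, LinearMap.trace_one, smul_eq_mul, mul_comm]
  exact Finset.sum_subtype _ (fun _ => Set.Finite.mem_toFinset _) _

theorem IsSemisimple.eq_one_of_forall_hasEigenvalue (hf : f.IsSemisimple)
    (h : ∀ μ, f.HasEigenvalue μ → μ = 1) : f = 1 := by
  have htop : f.eigenspace 1 = ⊤ := by
    rw [eq_top_iff, ← hf.iSup_eigenspace_eq_top]
    refine iSup_le fun μ => ?_
    by_cases hμ : f.HasEigenvalue μ
    · rw [h μ hμ]
    · rw [hasEigenvalue_iff, not_not] at hμ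
      simp [hμ]
  ext x
  simpa using mem_eigenspace_iff.mp (htop ▸ Submodule.mem_top : x ∈ f.eigenspace 1)

end IsAlgClosed

section Complex

variable {V : Type*} [AddCommGroup V] [Module ℂ V] [FiniteDimensional ℂ V] {f : End ℂ V} {k : ℕ}

theorem star_trace_eq_trace_pow_pred (hk : k ≠ 0) (hf : f ^ k = 1) :
    star (LinearMap.trace ℂ V f) = LinearMap.trace ℂ V (f ^ (k - 1)) := by
  have hss := isSemisimple_of_pow_eq_one (Nat.cast_ne_zero.mpr hk) hf
  have htr := hss.trace_pow_eq_sum_eigenvalues 1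
  rw [pow_one] at htr
  rw [htr, hss.trace_pow_eq_sum_eigenvalues, star_sum]
  refine Finset.sum_congr rfl fun μ _ => ?_
  have hμ : (μ : ℂ) ^ k = 1 := HasEigenvalue.pow_eq_one μ.2 hf
  have hμ0 : (μ : ℂ) ≠ 0 := by rintro h; simp [h, hk] at hμ
  have hstar : star (μ : ℂ) = μ ^ (k - 1) := by
    rw [Complex.star_def, ← Complex.inv_eq_conj (Complex.norm_eq_one_of_pow_eq_one hμ hk),
      pow_sub₀ _ hμ0 (Nat.one_le_iff_ne_zero.mpr hk), hμ, pow_one, one_mul]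
  simp [hstar]

theorem eq_one_of_trace_eq_finrank (hk : k ≠ 0) (hf : f ^ k = 1)
    (htr : LinearMap.trace ℂ V f = finrank ℂ V) : f = 1 := by
  have hss := isSemisimple_of_pow_eq_one (Nat.cast_ne_zero.mpr hk) hf
  refine hss.eq_one_of_forall_hasEigenvalue fun μ hμ => ?_
  -- The eigenvalues lie on the unit circle, so each term of this sum is nonnegative.
  have hsum : ∑ ν : f.Eigenvalues,
      (finrank ℂ (f.eigenspace ν) : ℝ) * (1 - (ν : ℂ).re) = 0 := by
    have h0 := hss.trace_pow_eq_sum_eigenvalues 0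
    have h1 := hss.trace_pow_eq_sum_eigenvalues 1
    rw [pow_zero, LinearMap.trace_one, ← htr] at h0
    rw [pow_one, h0, ← sub_eq_zero, ← Finset.sum_sub_distrib] at h1
    simpa [mul_sub] using congrArg Complex.re h1
  have hnorm (ν : ℂ) (hν : f.HasEigenvalue ν) : ‖ν‖ = 1 :=
    Complex.norm_eq_one_of_pow_eq_one (hν.pow_eq_one hf) hk
  have hterm : (finrank ℂ (f.eigenspace μ) : ℝ) * (1 - μ.re) = 0 :=
    (Finset.sum_eq_zero_iff_of_nonneg fun (ν : f.Eigenvalues) _ => mul_nonneg (Nat.cast_nonneg _)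
      (sub_nonneg.mpr ((Complex.re_le_norm _).trans (hnorm ν ν.2).le))).mp hsum ⟨μ, hμ⟩
      (Finset.mem_univ _)
  have hdμ : finrank ℂ (f.eigenspace μ) ≠ 0 := by
    have := Submodule.nontrivial_iff_ne_bot.mpr hμ
    exact finrank_pos.ne'
  have hre : μ.re = ‖μ‖ := by
    rw [hnorm μ hμ]
    linarith [(mul_eq_zero.mp hterm).resolve_left (Nat.cast_ne_zero.mpr hdμ)]
  rw [Complex.eq_coe_norm_of_nonneg (Complex.re_eq_norm.mp hre), hnorm μ hμ, Complex.ofReal_one]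

end Complex

end Module.End

namespace FDRep

section

variable {k G : Type*} [Field k] [Monoid G]

theorem exists_character_eq_pow_mul (ρ V : FDRep k G) :
    ∀ L : ℕ, ∃ W : FDRep k G, W.character = ρ.character ^ L * V.character
  | 0 => ⟨V, by simp⟩
  | L + 1 => by
    obtain ⟨W, hW⟩ := exists_character_eq_pow_mul ρ V L
    exact ⟨ρ ⊗ W, by rw [char_tensor, hW, pow_succ', mul_assoc]⟩

theorem finrank_ne_zero_of_simple (V : FDRep k G) [Simple V] : finrank k V ≠ 0 := by
  intro h
  have : Subsingleton V := finrank_zero_iff.mp h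
  exact id_nonzero V (by ext v; exact Subsingleton.elim _ _)

end

variable {G : Type} [Group G]

theorem ρ_pow_card_eq_one {k : Type} [Field k] (V : FDRep k G) (g : G) :
    V.ρ g ^ Nat.card G = 1 := by
  rw [← map_pow, pow_card_eq_one', map_one]

variable [Finite G]

theorem star_character (V : FDRep ℂ G) (g : G) : star (V.character g) = V.character g⁻¹ := by
  have hinv : g⁻¹ = g ^ (Nat.card G - 1) := by
    refine inv_eq_of_mul_eq_one_right ?_
    rw [← pow_succ', Nat.sub_add_cancel Nat.card_pos, pow_card_eq_one']
  unfold character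
  rw [hinv, map_pow]
  exact End.star_trace_eq_trace_pow_pred Nat.card_pos.ne' (V.ρ_pow_card_eq_one g)

theorem ρ_eq_one_of_character_eq_finrank (V : FDRep ℂ G) {g : G}
    (h : V.character g = finrank ℂ V) : V.ρ g = 1 :=
  End.eq_one_of_trace_eq_finrank Nat.card_pos.ne' (V.ρ_pow_card_eq_one g) h

end FDRep

theorem innChar_character_eq_finrank_hom {G : Type} [Group G] [Fintype G] (V W : FDRep ℂ G) :
    innChar G W.character V.character = finrank ℂ (V ⟶ W) := by
  have : Invertible (Nat.card G : ℂ) := invertibleOfNonzero (Nat.cast_ne_zero.mpr Nat.card_pos.ne')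
  rw [← FDRep.scalar_product_char_eq_finrank_equivariant, innChar, Nat.card_eq_fintype_card]
  simp_rw [starRingEnd_apply, FDRep.star_character]

theorem innChar_eq_zero_iff {G : Type} [Group G] [Fintype G] {φ ψ : G → ℂ} :
    innChar G φ ψ = 0 ↔ ∑ g, φ g * star (ψ g) = 0 := by
  simp only [innChar, starRingEnd_apply, mul_eq_zero, inv_eq_zero, Nat.cast_eq_zero,
    Fintype.card_ne_zero, false_or]

theorem eq_zero_of_forall_sum_pow_mul_eq_zero {ι K : Type*} [Fintype ι] [Field K] {a x : ι → K}
    {i₀ : ι} (hx : ∀ i, x i = x i₀ → i = i₀) (h : ∀ L : ℕ, ∑ i, x i ^ L * a i = 0) :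
    a i₀ = 0 := by
  classical
  have hpoly (p : K[X]) : ∑ i, p.eval (x i) * a i = 0 := by
    induction p using Polynomial.induction_on' with
    | add p q hp hq => simp [add_mul, Finset.sum_add_distrib, hp, hq]
    | monomial n c => simp [mul_assoc, ← Finset.mul_sum, h n]
  let p := Lagrange.basis (Finset.univ.image x) id (x i₀)
  have hp (i : ι) : p.eval (x i) = if i = i₀ then 1 else 0 := by
    have hxi := Finset.mem_image_of_mem x (Finset.mem_univ i)
    split_ifs with hi
    · subst hi
      exact Lagrange.eval_basis_self (v := id) (Set.injOn_id _) hxi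
    · exact Lagrange.eval_basis_of_ne (v := id) (fun h' => hi (hx i h'.symm)) hxi
  simpa [hp] using hpoly p

/-- If `ρ` is a faithful finite-dimensional complex representation of `G`, then the McKay
quiver of `ρ` is strongly connected: for all irreducible characters `χᵢ, χⱼ` there is a
walk from the vertex of `χᵢ` to the vertex of `χⱼ`, i.e. there exists `L ≥ 0` with
`⟨χ_ρ^L · χᵢ, χⱼ⟩ ≥ 1`. -/
theorem mckay_quiver_strongly_connected_of_faithful (G : Type) [Group G] [Fintype G]
    (ρ : FDRep ℂ G) (hfaithful : Function.Injective ρ.ρ)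
    (χi χj : G → ℂ) (hχi : IsIrrChar G χi) (hχj : IsIrrChar G χj) :
    ∃ L : ℕ, 1 ≤ innChar G (ρ.character ^ L * χi) χj := by
  obtain ⟨Vi, hVi, rfl⟩ := hχi
  obtain ⟨Vj, hVj, rfl⟩ := hχj
  by_contra! hlt
  have hvanish (L : ℕ) :
      ∑ g, ρ.character g ^ L * (Vi.character g * star (Vj.character g)) = 0 := by
    obtain ⟨W, hW⟩ := ρ.exists_character_eq_pow_mul Vi L
    have h0 : innChar G (ρ.character ^ L * Vi.character) Vj.character = 0 := by
      have := hlt L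
      rw [← hW, innChar_character_eq_finrank_hom] at this ⊢
      simpa [Nat.one_le_cast] using this
    simpa only [innChar_eq_zero_iff, Pi.mul_apply, Pi.pow_apply, mul_assoc] using h0
  have hsep (g : G) (hg : ρ.character g = ρ.character 1) : g = 1 :=
    hfaithful <| by rw [map_one]; exact ρ.ρ_eq_one_of_character_eq_finrank (hg.trans ρ.char_one)
  have := eq_zero_of_forall_sum_pow_mul_eq_zero hsep hvanish
  simp [FDRep.finrank_ne_zero_of_simple Vi, FDRep.finrank_ne_zero_of_simple Vj] at this
end

section
/- Let G be a finite group, ρ a finite-dimensional complex representation of G with character χ_ρ, and N = ker ρ = {g ∈ G : ρ(g) = id}. Let χ_i, χ_j be irreducible characters of G. If there exists a natural number L ≥ 0 such that ⟨χ_ρ^L · χ_i, χ_j⟩ ≥ 1 (i.e., there is a walk from the vertex of χ_i to the vertex of χ_j in the McKay quiver), then the restrictions of χ_i and χ_j to N are proportional: there exists c ∈ ℂ with χ_i(n) = c · χ_j(n) for all n ∈ N. -/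
open scoped ComplexOrder

/-!
For `n ∈ ker ρ` the class sum `∑_g V(g n g⁻¹)` of an irreducible `V` is a scalar `ω_V(n)` by Schur,
with `|G| χ_V(n) = ω_V(n) χ_V(1)`. A walk of length `L` from `χᵢ` to `χⱼ` gives a nonzero
`G`-map `Vⱼ → ρ^{⊗L} ⊗ Vᵢ`, and on `ρ^{⊗L} ⊗ Vᵢ` the class sum of `n` is again `ω_{Vᵢ}(n)`
because `ρ` is trivial on the conjugates of `n`. Intertwiners preserve class sums, so
`ω_{Vᵢ}(n) = ω_{Vⱼ}(n)`, which is the proportionality. Translating `⟨·,·⟩` into the pairing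
`∑ φ(g) ψ(g⁻¹)` that computes dimensions of hom spaces uses `χ(g⁻¹) = conj χ(g)`, proved by the
same comparison between `V` and the complex conjugate of its dual.
-/

open Module

namespace Module.End

variable {k : Type*} [Field k] (σ : k →+* k) {V : Type*} [AddCommGroup V] [Module k V]
  [FiniteDimensional k V]

variable (V) in
/-- Applies `σ` entrywise to matrices in the basis `Module.finBasis`; for `σ` the complex
conjugation this turns a representation into its complex conjugate. -/
noncomputable def twist : Module.End k V →+* Module.End k (Fin (finrank k V) → k) :=
  (Matrix.toLinAlgEquiv' : Matrix (Fin (finrank k V)) (Fin (finrank k V)) k ≃ₐ[k] _).toRingHom.comp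
    (σ.mapMatrix.comp (LinearMap.toMatrixAlgEquiv (finBasis k V)).toRingHom)

theorem twist_smul (c : k) (f : Module.End k V) : twist σ V (c • f) = σ c • twist σ V f := by
  simp [twist, Matrix.map_smul' _ _ _ (map_mul σ)]

theorem trace_twist (f : Module.End k V) :
    LinearMap.trace k _ (twist σ V f) = σ (LinearMap.trace k V f) := by
  change LinearMap.trace k _
    (Matrix.toLin' ((LinearMap.toMatrix (finBasis k V) (finBasis k V) f).map σ)) = _
  rw [Matrix.trace_toLin'_eq, LinearMap.trace_eq_matrix_trace k (finBasis k V)]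
  simp [Matrix.trace]

end Module.End

namespace Representation

section ClassSum

variable {k G V W : Type*} [Field k] [Group G] [Fintype G]
  [AddCommGroup V] [Module k V] [AddCommGroup W] [Module k W]
  (ρ : Representation k G V) (σ : Representation k G W)

def classSum (n : G) : Module.End k V :=
  ∑ g : G, ρ (g * n * g⁻¹)

theorem classSum_mul_comm (n h : G) : ρ.classSum n * ρ h = ρ h * ρ.classSum n := by
  simp only [classSum, Finset.sum_mul, Finset.mul_sum, ← map_mul]
  exact Fintype.sum_equiv (Equiv.mulLeft h⁻¹) _ _ fun g => by
    simp only [Equiv.coe_mulLeft]; congr 1; group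

variable {ρ σ}

theorem IntertwiningMap.comp_classSum (f : IntertwiningMap ρ σ) (n : G) :
    f.toLinearMap ∘ₗ ρ.classSum n = σ.classSum n ∘ₗ f.toLinearMap := by
  ext v
  simp [classSum, map_sum, f.isIntertwining]

theorem eq_of_classSum_eq_smul_one {f : IntertwiningMap ρ σ} (hf : f ≠ 0) {n : G} {a b : k}
    (ha : ρ.classSum n = a • 1) (hb : σ.classSum n = b • 1) : a = b := by
  have hcomm := f.comp_classSum n
  rw [ha, hb, LinearMap.comp_smul, LinearMap.smul_comp] at hcomm
  have hsub : (a - b) • f.toLinearMap = 0 := by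
    rw [sub_smul, sub_eq_zero]
    simpa [Module.End.one_eq_id] using hcomm
  rcases smul_eq_zero.1 hsub with h | h
  · exact sub_eq_zero.1 h
  · exact absurd (IntertwiningMap.ext h) hf

variable (ρ σ)

theorem trace_classSum [FiniteDimensional k V] (n : G) :
    LinearMap.trace k V (ρ.classSum n) = Fintype.card G * ρ.character n := by
  simp only [classSum, map_sum]
  exact (Finset.sum_congr rfl fun g _ => ρ.char_conj n g).trans (by simp)

theorem card_mul_character_eq_of_classSum_eq_smul_one [FiniteDimensional k V] {n : G} {c : k}
    (hc : ρ.classSum n = c • 1) : Fintype.card G * ρ.character n = c * finrank k V := by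
  rw [← trace_classSum, hc, map_smul, LinearMap.trace_one, smul_eq_mul]

theorem classSum_tprod_of_eq_one {n : G} (hn : ρ n = 1) {c : k} (hc : σ.classSum n = c • 1) :
    (ρ.tprod σ).classSum n = c • 1 := by
  have hconj (g : G) : ρ (g * n * g⁻¹) = 1 := by
    rw [map_mul, map_mul, hn, mul_one, ← map_mul, mul_inv_cancel, map_one]
  calc (ρ.tprod σ).classSum n = LinearMap.lTensor V (σ.classSum n) := by
        simp only [classSum, tprod_apply, hconj, ← LinearMap.coe_lTensorHom, map_sum]
        rfl
    _ = c • 1 := by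
        rw [hc, LinearMap.lTensor_smul, Module.End.one_eq_id, LinearMap.lTensor_id]
        rfl

theorem classSum_dual_of_eq_smul_one {n : G} {c : k} (hc : ρ.classSum n⁻¹ = c • 1) :
    ρ.dual.classSum n = c • 1 := by
  have htranspose : ρ.dual.classSum n = Dual.transpose (ρ.classSum n⁻¹) := by
    simp only [classSum, dual_apply, map_sum, mul_inv_rev, inv_inv, mul_assoc]
  rw [htranspose, hc, map_smul]
  rfl

theorem exists_intertwiningMap_ne_zero [NeZero (Nat.card G : k)] [FiniteDimensional k V]
    [FiniteDimensional k W] (h : ∑ g : G, σ.character g * ρ.character g⁻¹ ≠ 0) :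
    ∃ f : IntertwiningMap ρ σ, f ≠ 0 := by
  have := invertibleOfNonzero (NeZero.ne (Nat.card G : k))
  by_contra! hzero
  have : Subsingleton (IntertwiningMap ρ σ) := ⟨fun f g => (hzero f).trans (hzero g).symm⟩
  have hdim := card_inv_mul_sum_char_mul_char_eq_finrank ρ σ
  rw [finrank_zero_of_subsingleton, Nat.cast_zero, mul_eq_zero] at hdim
  exact hdim.elim (inv_ne_zero (NeZero.ne _)) h

end ClassSum

section Twist

variable {k G V : Type*} [Field k] [Group G] [AddCommGroup V] [Module k V]
  [FiniteDimensional k V] (σ : k →+* k) (ρ : Representation k G V)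

noncomputable def twist : Representation k G (Fin (finrank k V) → k) :=
  (Module.End.twist σ V).toMonoidHom.comp ρ

theorem char_twist (g : G) : (ρ.twist σ).character g = σ (ρ.character g) :=
  Module.End.trace_twist σ (ρ g)

theorem classSum_twist_of_eq_smul_one [Fintype G] {n : G} {c : k} (hc : ρ.classSum n = c • 1) :
    (ρ.twist σ).classSum n = σ c • 1 := by
  have htwist : (ρ.twist σ).classSum n = Module.End.twist σ V (ρ.classSum n) := by
    simp only [classSum, map_sum]
    rfl
  rw [htwist, hc, Module.End.twist_smul, map_one]

end Twist

end Representation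

namespace FDRep

open CategoryTheory MonoidalCategory Representation

variable {k G : Type*} [Field k] [Group G]

theorem finrank_pos (V : FDRep k G) [Simple V] : 0 < finrank k V := by
  rw [finrank_pos_iff]
  by_contra h
  rw [not_nontrivial_iff_subsingleton] at h
  exact id_nonzero V (by ext x; exact Subsingleton.elim _ _)

theorem character_one_ne_zero [CharZero k] (V : FDRep k G) [Simple V] : V.character 1 ≠ 0 := by
  rw [char_one]
  exact_mod_cast (finrank_pos V).ne'

theorem card_mul_character_eq_of_classSum_eq_smul_one [Fintype G] (V : FDRep k G) {n : G}
    {c : k} (hc : classSum V.ρ n = c • 1) :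
    Fintype.card G * V.character n = c * V.character 1 := by
  rw [char_one]
  exact Representation.card_mul_character_eq_of_classSum_eq_smul_one V.ρ hc

theorem exists_eq_smul_one_of_mul_comm [IsAlgClosed k] (V : FDRep k G) [Simple V]
    (T : Module.End k V) (hT : ∀ g, T * V.ρ g = V.ρ g * T) : ∃ c : k, T = c • 1 := by
  let φ : V ⟶ V := forget₂HomLinearEquiv V V (Rep.ofHom ⟨T, hT⟩)
  obtain ⟨c, hc⟩ := endomorphism_simple_eq_smul_id k φ
  exact ⟨c, congrArg (fun ψ : V ⟶ V => ψ.hom.hom.hom) hc.symm⟩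

theorem exists_classSum_eq_smul_one [Fintype G] [IsAlgClosed k] (V : FDRep k G) [Simple V]
    (n : G) : ∃ c : k, classSum V.ρ n = c • 1 :=
  exists_eq_smul_one_of_mul_comm V _ (classSum_mul_comm V.ρ n)

def tensorPowTensor (ρ : FDRep k G) : ℕ → FDRep k G → FDRep k G
  | 0, V => V
  | L + 1, V => ρ ⊗ tensorPowTensor ρ L V

theorem character_tensorPowTensor (ρ V : FDRep k G) (L : ℕ) :
    (ρ.tensorPowTensor L V).character = ρ.character ^ L * V.character := by
  induction L with
  | zero => simp [tensorPowTensor]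
  | succ L ih => rw [tensorPowTensor, char_tensor, ih, pow_succ']; ring

theorem tensor_ρ (V W : FDRep k G) : (V ⊗ W).ρ = tprod V.ρ W.ρ :=
  MonoidHom.ext fun _ => rfl

theorem classSum_tensorPowTensor_of_eq_one [Fintype G] (ρ V : FDRep k G) (L : ℕ) {n : G}
    (hn : ρ.ρ n = 1) {c : k} (hc : classSum V.ρ n = c • 1) :
    classSum (ρ.tensorPowTensor L V).ρ n = c • 1 := by
  induction L with
  | zero => exact hc
  | succ L ih =>
    rw [tensorPowTensor, tensor_ρ]
    exact classSum_tprod_of_eq_one ρ.ρ _ hn ih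

/-- The character pairing of `V` with the complex conjugate `Y` of its dual is `∑ |χ_V|² ≠ 0`, so
some nonzero map `Y → V` matches the class-sum scalar of `V` at `g⁻¹` with the conjugate of the
one at `g`. -/
theorem character_inv [Fintype G] (V : FDRep ℂ G) [Simple V] (g : G) :
    V.character g⁻¹ = starRingEnd ℂ (V.character g) := by
  set Y := (dual V.ρ).twist (starRingEnd ℂ)
  have hY (g : G) : Y.character g = starRingEnd ℂ (V.character g⁻¹) := by
    rw [char_twist, Representation.char_dual]
    rfl
  have hpairing : ∑ g : G, V.character g * Y.character g⁻¹ ≠ 0 := by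
    simp_rw [hY, inv_inv, Complex.mul_conj, ← Complex.ofReal_sum, Complex.ofReal_ne_zero]
    refine (Finset.sum_pos' (fun g _ => Complex.normSq_nonneg _) ⟨1, Finset.mem_univ _, ?_⟩).ne'
    exact Complex.normSq_pos.2 (character_one_ne_zero V)
  obtain ⟨f, hf⟩ := exists_intertwiningMap_ne_zero Y V.ρ hpairing
  obtain ⟨a, ha⟩ := exists_classSum_eq_smul_one V g⁻¹
  obtain ⟨b, hb⟩ := exists_classSum_eq_smul_one V g
  have hab : starRingEnd ℂ b = a := eq_of_classSum_eq_smul_one hf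
    (classSum_twist_of_eq_smul_one _ _ (classSum_dual_of_eq_smul_one _ (by rwa [inv_inv]))) ha
  have hinv := card_mul_character_eq_of_classSum_eq_smul_one V ha
  have hconj := congrArg (starRingEnd ℂ) (card_mul_character_eq_of_classSum_eq_smul_one V hb)
  simp only [map_mul, map_natCast, char_one, hab] at hconj
  rw [char_one] at hinv
  exact mul_left_cancel₀ (Nat.cast_ne_zero.2 Fintype.card_ne_zero) (hinv.trans hconj.symm)

end FDRep

theorem innChar_character {G : Type} [Group G] [Fintype G] (V : FDRep ℂ G)
    [CategoryTheory.Simple V] (φ : G → ℂ) :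
    innChar G φ V.character = (Fintype.card G : ℂ)⁻¹ * ∑ g : G, φ g * V.character g⁻¹ := by
  simp only [innChar, FDRep.character_inv]

open FDRep Representation in
/-- If there is a walk from the vertex of `χᵢ` to the vertex of `χⱼ` in the McKay quiver of
`ρ` (i.e. `⟨χ_ρ^L · χᵢ, χⱼ⟩ ≥ 1` for some `L ≥ 0`), then the restrictions of the
irreducible characters `χᵢ` and `χⱼ` to `N = ker ρ` are proportional. -/
theorem mckay_proportional_restriction_of_walk (G : Type) [Group G] [Fintype G]
    (ρ : FDRep ℂ G) (χi χj : G → ℂ) (hχi : IsIrrChar G χi) (hχj : IsIrrChar G χj)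
    (hwalk : ∃ L : ℕ, 1 ≤ innChar G (ρ.character ^ L * χi) χj) :
    ∃ c : ℂ, ∀ n : G, ρ.ρ n = 1 → χi n = c * χj n := by
  obtain ⟨V, hV, rfl⟩ := hχi
  obtain ⟨W, hW, rfl⟩ := hχj
  obtain ⟨L, hL⟩ := hwalk
  set X := ρ.tensorPowTensor L V
  have hcard : (Fintype.card G : ℂ) ≠ 0 := Nat.cast_ne_zero.2 Fintype.card_ne_zero
  obtain ⟨f, hf⟩ : ∃ f : IntertwiningMap W.ρ X.ρ, f ≠ 0 := by
    refine exists_intertwiningMap_ne_zero W.ρ X.ρ (right_ne_zero_of_mul (a := (Fintype.card G : ℂ)⁻¹) ?_)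
    rw [← character_tensorPowTensor, innChar_character] at hL
    exact (zero_lt_one.trans_le hL).ne'
  refine ⟨V.character 1 / W.character 1, fun n hn => ?_⟩
  obtain ⟨a, ha⟩ := exists_classSum_eq_smul_one V n
  obtain ⟨b, hb⟩ := exists_classSum_eq_smul_one W n
  have hba : b = a :=
    eq_of_classSum_eq_smul_one hf hb (classSum_tensorPowTensor_of_eq_one ρ V L hn ha)
  have hVn := card_mul_character_eq_of_classSum_eq_smul_one V ha
  have hWn := card_mul_character_eq_of_classSum_eq_smul_one W (hba ▸ hb)
  rw [div_mul_eq_mul_div, eq_div_iff (character_one_ne_zero W)]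
  refine mul_left_cancel₀ hcard ?_
  linear_combination W.character 1 * hVn - V.character 1 * hWn
end

section
/- Let G be a finite group, ρ a finite-dimensional complex representation of G with character χ_ρ, and λ a one-dimensional irreducible character of G. Then there is a bijection e of Irr(G) given by e(χ) = λ·χ satisfying ⟨χ_ρ · χ_i, χ_j⟩ = ⟨χ_ρ · e(χ_i), e(χ_j)⟩ for all irreducible characters χ_i, χ_j, which sends the trivial character to λ; consequently e restricts to an isomorphism from the connected component of the McKay quiver containing the trivial character (the principal component) onto the connected component containing λ. In particular, any connected component of the McKay quiver containing a vertex corresponding to a one-dimensional representation is isomorphic to the principal component. -/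
open scoped ComplexOrder

/-! Tensoring with a one-dimensional representation `W` preserves simplicity: its character `λ`
is multiplicative, so `λ(g) λ(g⁻¹) = 1` and the norm criterion `∑ χ(g) χ(g⁻¹) = |G|` is unchanged.
Hence multiplication by `λ` permutes `Irr(G)`, and since `|λ(g)| = 1` it preserves every
multiplicity `⟨χ_ρ χ_i, χ_j⟩`, so it is an automorphism of the McKay quiver carrying the trivial
character to `λ`. -/

open CategoryTheory MonoidalCategory Module

theorem LinearMap.trace_mul_of_finrank_eq_one {K V : Type*} [Field K] [AddCommGroup V]
    [Module K V] (hV : finrank K V = 1) (f g : V →ₗ[K] V) :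
    trace K V (f * g) = trace K V f * trace K V g := by
  have : Module.Finite K V := Module.finite_of_finrank_eq_succ hV
  obtain ⟨a, rfl, -⟩ := existsUnique_eq_smul_id_of_finrank_eq_one hV f
  obtain ⟨b, rfl, -⟩ := existsUnique_eq_smul_id_of_finrank_eq_one hV g
  rw [smul_mul_smul_comm, ← Module.End.one_eq_id, one_mul]
  simp [trace_one, hV]

theorem MonoidHom.conj_mul_self_eq_one {G : Type*} [Group G] [Finite G] (χ : G →* ℂ) (g : G) :
    starRingEnd ℂ (χ g) * χ g = 1 := by
  have hpow : χ g ^ orderOf g = 1 := by rw [← map_pow, pow_orderOf_eq_one, map_one]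
  rw [mul_comm, Complex.mul_conj, Complex.normSq_eq_norm_sq,
    Complex.norm_eq_one_of_pow_eq_one hpow (orderOf_pos g).ne']
  norm_num

theorem Relation.EqvGen.map {α β : Type*} {r : α → α → Prop} {s : β → β → Prop} (f : α → β)
    (hf : ∀ a b, r a b → s (f a) (f b)) {a b : α} (hab : EqvGen r a b) :
    EqvGen s (f a) (f b) := by
  induction hab with
  | rel x y hxy => exact .rel _ _ (hf x y hxy)
  | refl x => exact .refl _
  | symm x y _ ih => exact .symm _ _ ih
  | trans x y z _ _ ihxy ihyz => exact .trans _ _ _ ihxy ihyz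

theorem Relation.eqvGen_equiv_iff {α β : Type*} {r : α → α → Prop} {s : β → β → Prop}
    (e : α ≃ β) (he : ∀ a b, r a b ↔ s (e a) (e b)) (a b : α) :
    EqvGen r a b ↔ EqvGen s (e a) (e b) := by
  refine ⟨EqvGen.map e fun x y => (he x y).mp, fun h => ?_⟩
  simpa using h.map e.symm fun x y hxy => (he _ _).mpr (by simpa using hxy)

namespace FDRep

universe u

variable {k G : Type u} [Field k] [Group G]

theorem char_mul_of_finrank_eq_one (V : FDRep k G) (hV : finrank k V = 1) (g h : G) :
    V.character (g * h) = V.character g * V.character h := by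
  simp only [character, map_mul]
  exact LinearMap.trace_mul_of_finrank_eq_one hV _ _

noncomputable def characterHom (V : FDRep k G) (hV : finrank k V = 1) : G →* k where
  toFun := V.character
  map_one' := by rw [char_one, hV, Nat.cast_one]
  map_mul' := char_mul_of_finrank_eq_one V hV

theorem simple_tensor_of_finrank_eq_one [IsAlgClosed k] [CharZero k] [Fintype G]
    (V W : FDRep k G) (hV : finrank k V = 1) [Simple W] : Simple (V ⊗ W) := by
  have hW := (simple_iff_char_is_norm_one W).mp inferInstance
  rw [simple_iff_char_is_norm_one, char_tensor, ← hW]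
  refine Finset.sum_congr rfl fun g _ => ?_
  have hunit : V.character g * V.character g⁻¹ = 1 := by
    rw [← char_mul_of_finrank_eq_one V hV, mul_inv_cancel, char_one, hV, Nat.cast_one]
  rw [Pi.mul_apply, Pi.mul_apply, mul_mul_mul_comm, hunit, one_mul]

end FDRep

namespace IsIrrChar

variable {G : Type} [Group G]

theorem exists_monoidHom_eq_of_map_one {lam : G → ℂ} (hlam : IsIrrChar G lam)
    (hdeg : lam 1 = 1) : ∃ χ : G →* ℂ, ⇑χ = lam := by
  obtain ⟨V, -, rfl⟩ := hlam
  exact ⟨V.characterHom (by exact_mod_cast (FDRep.char_one V).symm.trans hdeg), rfl⟩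

theorem mul_of_map_one [Fintype G] {lam χ : G → ℂ} (hlam : IsIrrChar G lam) (hdeg : lam 1 = 1)
    (hχ : IsIrrChar G χ) : IsIrrChar G (lam * χ) := by
  obtain ⟨V, -, rfl⟩ := hlam
  obtain ⟨W, hW, rfl⟩ := hχ
  have hV : finrank ℂ V = 1 := by exact_mod_cast (FDRep.char_one V).symm.trans hdeg
  exact ⟨V ⊗ W, FDRep.simple_tensor_of_finrank_eq_one V W hV, FDRep.char_tensor V W⟩

end IsIrrChar

theorem innChar_mul_mul {G : Type} [Group G] [Fintype G] (u φ ψ : G → ℂ)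
    (hu : ∀ g, starRingEnd ℂ (u g) * u g = 1) :
    innChar G (u * φ) (u * ψ) = innChar G φ ψ := by
  unfold innChar
  congr 1
  refine Finset.sum_congr rfl fun g _ => ?_
  simp only [Pi.mul_apply, map_mul]
  linear_combination (φ g * starRingEnd ℂ (ψ g)) * hu g

/-- For a one-dimensional irreducible character `λ` of `G`, multiplication by `λ` is a
bijection `e` of `Irr(G)` preserving the McKay matrix entries and sending the trivial
character to `λ`; consequently `e` restricts to an isomorphism from the principal component
of the McKay quiver (the component of the trivial character) onto the component of `λ`.
In particular any component containing a one-dimensional character is isomorphic to the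
principal component. -/
theorem component_with_one_dimensional_char (G : Type) [Group G] [Fintype G]
    (Irr : Finset (G → ℂ)) (hIrr : ∀ χ, χ ∈ Irr ↔ IsIrrChar G χ)
    (ρ : FDRep ℂ G)
    (htriv : (fun _ : G => (1 : ℂ)) ∈ Irr)
    (lam : G → ℂ) (hlam : lam ∈ Irr) (hdeg : lam 1 = 1) :
    ∃ e : ↑Irr → ↑Irr, Function.Bijective e ∧
      (∀ i : ↑Irr, (↑(e i) : G → ℂ) = fun g => lam g * (↑i : G → ℂ) g) ∧
      (∀ i j : ↑Irr, innChar G (ρ.character * ↑i) ↑j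
        = innChar G (ρ.character * ↑(e i)) ↑(e j)) ∧
      e ⟨fun _ => 1, htriv⟩ = ⟨lam, hlam⟩ ∧
      (∀ i : ↑Irr,
        Relation.EqvGen (fun a b : ↑Irr => 1 ≤ innChar G (ρ.character * ↑a) ↑b)
          ⟨fun _ => 1, htriv⟩ i ↔
        Relation.EqvGen (fun a b : ↑Irr => 1 ≤ innChar G (ρ.character * ↑a) ↑b)
          ⟨lam, hlam⟩ (e i)) := by
  have hlamIrr := (hIrr lam).mp hlam
  obtain ⟨χ, rfl⟩ := hlamIrr.exists_monoidHom_eq_of_map_one hdeg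
  let e : Irr → Irr := fun i =>
    ⟨χ * i, (hIrr _).mpr (hlamIrr.mul_of_map_one hdeg ((hIrr i).mp i.2))⟩
  have he_bij : e.Bijective := Finite.injective_iff_bijective.mp fun i j hij =>
    Subtype.ext <| funext fun g =>
      mul_left_cancel₀ ((Group.isUnit g).map χ).ne_zero (congrFun (congrArg Subtype.val hij) g)
  have he_inner : ∀ i j : Irr, innChar G (ρ.character * i) j
      = innChar G (ρ.character * ↑(e i)) ↑(e j) := fun i j => by
    rw [show ρ.character * ↑(e i) = χ * (ρ.character * i) from mul_left_comm _ _ _,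
      innChar_mul_mul _ _ _ χ.conj_mul_self_eq_one]
  have he_triv : e ⟨fun _ => 1, htriv⟩ = ⟨χ, hlam⟩ := Subtype.ext (mul_one _)
  refine ⟨e, he_bij, fun i => rfl, he_inner, he_triv, fun i => ?_⟩
  rw [← he_triv]
  exact Relation.eqvGen_equiv_iff (Equiv.ofBijective e he_bij)
    (fun a b => by rw [he_inner]; rfl) _ i
end
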